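/- arXiv:2405.08358 — 2 statements merged into one kernel-verified Lean document; each statement's English description precedes it below -/
import Mathlib

section
/- Let λ > 0 and f ∈ L¹(∂T, ν). Then ν({ω ∈ ∂T : ℳf(ω) > λ}) ≤ λ⁻¹ ‖f‖_{L¹(ν)}; that is, the Hardy–Littlewood maximal operator ℳ associated with ν is of weak type (1,1) with constant at most 1. -/
open MeasureTheory
open scoped ENNReal NNReal

/-- The punctured boundary `∂T` of the tree: maps `ω : ℤ → T` with `lev (ω j) = j`
and `par (ω j) = ω (j+1)`. -/
def PBoundary {T : Type*} (par : T → T) (lev : T → ℤ) : Type _ :=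
  {ω : ℤ → T // (∀ j : ℤ, lev (ω j) = j) ∧ ∀ j : ℤ, par (ω j) = ω (j + 1)}

/-- The boundary sector `∂T_x`. -/
def sector {T : Type*} (par : T → T) (lev : T → ℤ) (x : T) : Set (PBoundary par lev) :=
  {ω : PBoundary par lev | ω.1 (lev x) = x}

/-- The σ-algebra on `∂T` generated by the sectors. -/
instance {T : Type*} (par : T → T) (lev : T → ℤ) : MeasurableSpace (PBoundary par lev) :=
  MeasurableSpace.generateFrom (Set.range (sector par lev))

/-- The flow measure `m_ν x = ν (∂T_x)` (as a real number). -/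
noncomputable def mnu {T : Type*} (par : T → T) (lev : T → ℤ)
    (ν : Measure (PBoundary par lev)) (x : T) : ℝ :=
  (ν (sector par lev x)).toReal

/-- The Hardy–Littlewood maximal operator associated with `ν`. -/
noncomputable def maximal {T : Type*} (par : T → T) (lev : T → ℤ)
    (ν : Measure (PBoundary par lev)) (f : PBoundary par lev → ℝ)
    (ω : PBoundary par lev) : ℝ≥0∞ :=
  ⨆ x : {x : T // ω.1 (lev x) = x},
    (ν (sector par lev x.1))⁻¹ * ∫⁻ ξ in sector par lev x.1, ENNReal.ofReal |f ξ| ∂ν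

/-
Stopping time. If `ℳf(ω) > λ`, some vertex `x` on the ray `ω` is bad: `λ ν(∂T_x) < ∫_{∂T_x} |f|`.
For any set `S` of vertices satisfying this inequality whose levels are bounded above, every
element of `S` lies below a topmost one, and two distinct topmost elements have disjoint sectors,
since two sectors meet only when one vertex is an ancestor of the other. Summing the inequality
over the topmost elements bounds `λ ν(⋃_{x ∈ S} ∂T_x)` by `∫ |f|`; letting the level bound tend to
infinity removes it. The sums are countable because a connected, locally finite tree is countable.
-/

section

variable {T : Type*} {par : T → T} {lev : T → ℤ}

lemma PBoundary.apply_add_natCast (ω : PBoundary par lev) (j : ℤ) (n : ℕ) :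
    ω.1 (j + n) = par^[n] (ω.1 j) := by
  induction n with
  | zero => simp
  | succ n ih =>
    rw [Function.iterate_succ_apply', ← ih, ω.2.2, Nat.cast_succ, add_assoc]

lemma measurableSet_sector (x : T) : MeasurableSet (sector par lev x) :=
  MeasurableSpace.measurableSet_generateFrom ⟨x, rfl⟩

lemma lev_iterate (hlev : ∀ x, lev (par x) = lev x + 1) (x : T) (n : ℕ) :
    lev (par^[n] x) = lev x + n := by
  induction n with
  | zero => simp
  | succ n ih => rw [Function.iterate_succ_apply', hlev, ih]; push_cast; ring

lemma sector_subset_sector_iterate (hlev : ∀ x, lev (par x) = lev x + 1) (x : T) (n : ℕ) :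
    sector par lev x ⊆ sector par lev (par^[n] x) := fun ω (hω : ω.1 (lev x) = x) => by
  show ω.1 (lev (par^[n] x)) = par^[n] x
  rw [lev_iterate hlev, PBoundary.apply_add_natCast, hω]

lemma eq_iterate_of_mem_sector {x y : T} {ω : PBoundary par lev}
    (hx : ω ∈ sector par lev x) (hy : ω ∈ sector par lev y) (h : lev x ≤ lev y) :
    y = par^[(lev y - lev x).toNat] x := by
  have hlev_y : lev y = lev x + ((lev y - lev x).toNat : ℤ) := by omega
  calc y = ω.1 (lev y) := hy.symm
    _ = ω.1 (lev x + ((lev y - lev x).toNat : ℤ)) := by rw [← hlev_y]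
    _ = par^[(lev y - lev x).toNat] x := by rw [PBoundary.apply_add_natCast]; exact congrArg _ hx

lemma finite_iterate_preimage_singleton (hfin : ∀ x, {y | par y = x}.Finite) (k : ℕ) (z : T) :
    (par^[k] ⁻¹' {z}).Finite := by
  induction k generalizing z with
  | zero => simp
  | succ k ih =>
    rw [Function.iterate_succ, Set.preimage_comp]
    exact (ih z).preimage' fun w _ => hfin w

lemma countable_of_finite_fibers (hfin : ∀ x, {y | par y = x}.Finite)
    (hconn : ∀ x y : T, ∃ n m : ℕ, par^[n] x = par^[m] y) : Countable T := by
  rcases isEmpty_or_nonempty T with hT | ⟨⟨x₀⟩⟩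
  · infer_instance
  · have hcover : (Set.univ : Set T) ⊆ ⋃ (n : ℕ) (k : ℕ), par^[k] ⁻¹' {par^[n] x₀} :=
      fun y _ => by
        obtain ⟨k, n, h⟩ := hconn y x₀
        exact Set.mem_iUnion₂.2 ⟨n, k, h⟩
    exact Set.countable_univ_iff.1 <| (Set.countable_iUnion fun n => Set.countable_iUnion
      fun k => (finite_iterate_preimage_singleton hfin k _).countable).mono hcover

def topmost (par : T → T) (S : Set T) : Set T :=
  {y ∈ S | ∀ n, 0 < n → par^[n] y ∉ S}

lemma exists_iterate_mem_topmost (hlev : ∀ x, lev (par x) = lev x + 1) {S : Set T} {K : ℤ}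
    (hK : ∀ x ∈ S, lev x ≤ K) {x : T} (hx : x ∈ S) : ∃ n, par^[n] x ∈ topmost par S := by
  classical
  have hbound : ∀ n, par^[n] x ∈ S → n ≤ (K - lev x).toNat := fun n hn => by
    have := hK _ hn
    rw [lev_iterate hlev] at this
    omega
  refine ⟨Nat.findGreatest (fun n => par^[n] x ∈ S) (K - lev x).toNat,
    Nat.findGreatest_spec (P := fun n => par^[n] x ∈ S) (Nat.zero_le _) hx, fun m hm hmem => ?_⟩
  rw [← Function.iterate_add_apply] at hmem
  have := Nat.le_findGreatest (P := fun n => par^[n] x ∈ S) (hbound _ hmem) hmem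
  omega

lemma pairwise_disjoint_sector_topmost (S : Set T) :
    Pairwise (Function.onFun Disjoint fun y : topmost par S => sector par lev y.1) := by
  intro y z hyz
  refine Set.disjoint_left.2 fun ω hωy hωz => hyz ?_
  wlog hle : lev y.1 ≤ lev z.1 generalizing y z
  · exact (this hyz.symm hωz hωy (le_of_not_ge hle)).symm
  have hz := eq_iterate_of_mem_sector hωy hωz hle
  rcases Nat.eq_zero_or_pos (lev z.1 - lev y.1).toNat with h0 | hpos
  · rw [h0, Function.iterate_zero, id_eq] at hz
    exact Subtype.ext hz.symm
  · exact absurd (hz ▸ z.2.1) (y.2.2 _ hpos)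

variable {ν : Measure (PBoundary par lev)} {g : PBoundary par lev → ℝ≥0∞} {L : ℝ≥0∞}

lemma mul_measure_biUnion_sector_le_of_lev_le [Countable T] (hlev : ∀ x, lev (par x) = lev x + 1)
    {S : Set T} {K : ℤ} (hK : ∀ x ∈ S, lev x ≤ K)
    (hS : ∀ x ∈ S, L * ν (sector par lev x) ≤ ∫⁻ ω in sector par lev x, g ω ∂ν) :
    L * ν (⋃ x ∈ S, sector par lev x) ≤ ∫⁻ ω, g ω ∂ν := by
  have hcover : ⋃ x ∈ S, sector par lev x = ⋃ y : topmost par S, sector par lev y.1 := by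
    refine subset_antisymm (Set.iUnion₂_subset fun x hx => ?_)
      (Set.iUnion_subset fun y => Set.subset_biUnion_of_mem y.2.1)
    obtain ⟨n, hn⟩ := exists_iterate_mem_topmost hlev hK hx
    exact (sector_subset_sector_iterate hlev x n).trans
      (Set.subset_iUnion (fun y : topmost par S => sector par lev y.1) ⟨_, hn⟩)
  have hdisj := pairwise_disjoint_sector_topmost (par := par) (lev := lev) S
  calc L * ν (⋃ x ∈ S, sector par lev x)
      = ∑' y : topmost par S, L * ν (sector par lev y.1) := by
        rw [hcover, measure_iUnion hdisj fun y => measurableSet_sector _, ENNReal.tsum_mul_left]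
    _ ≤ ∑' y : topmost par S, ∫⁻ ω in sector par lev y.1, g ω ∂ν :=
        ENNReal.tsum_le_tsum fun y => hS _ y.2.1
    _ = ∫⁻ ω in ⋃ y : topmost par S, sector par lev y.1, g ω ∂ν :=
        (lintegral_iUnion (fun y => measurableSet_sector _) hdisj g).symm
    _ ≤ ∫⁻ ω, g ω ∂ν := setLIntegral_le_lintegral _ _

lemma mul_measure_biUnion_sector_le [Countable T] (hlev : ∀ x, lev (par x) = lev x + 1)
    {S : Set T} (hS : ∀ x ∈ S, L * ν (sector par lev x) ≤ ∫⁻ ω in sector par lev x, g ω ∂ν) :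
    L * ν (⋃ x ∈ S, sector par lev x) ≤ ∫⁻ ω, g ω ∂ν := by
  let U : ℕ → Set (PBoundary par lev) := fun K => ⋃ x ∈ {x ∈ S | lev x ≤ K}, sector par lev x
  have hU : ⋃ x ∈ S, sector par lev x = ⋃ K, U K := by
    refine subset_antisymm (Set.iUnion₂_subset fun x hx => ?_)
      (Set.iUnion_subset fun K => Set.biUnion_subset_biUnion_left fun x hx => hx.1)
    exact (Set.subset_biUnion_of_mem (u := fun x => sector par lev x)
      (⟨hx, Int.self_le_toNat _⟩ : x ∈ {x ∈ S | lev x ≤ (lev x).toNat})).trans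
      (Set.subset_iUnion U _)
  have hmono : Monotone U := fun K K' hKK' =>
    Set.biUnion_subset_biUnion_left fun x hx => ⟨hx.1, hx.2.trans (by exact_mod_cast hKK')⟩
  rw [hU, hmono.measure_iUnion, ENNReal.mul_iSup]
  exact iSup_le fun K =>
    mul_measure_biUnion_sector_le_of_lev_le hlev (fun x hx => hx.2) fun x hx => hS x hx.1

lemma setOf_lt_maximal_subset (f : PBoundary par lev → ℝ) (L : ℝ≥0∞) :
    {ω | L < maximal par lev ν f ω} ⊆ ⋃ x ∈ {x | L * ν (sector par lev x) <
      ∫⁻ ξ in sector par lev x, ENNReal.ofReal |f ξ| ∂ν}, sector par lev x := by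
  intro ω (hω : L < maximal par lev ν f ω)
  obtain ⟨⟨x, hx⟩, hlt⟩ := lt_iSup_iff.1 hω
  rw [← ENNReal.div_eq_inv_mul] at hlt
  exact Set.mem_biUnion (ENNReal.mul_lt_of_lt_div hlt) hx

end

theorem stmt0_general {T : Type*} (par : T → T) (lev : T → ℤ)
    (hlev : ∀ x : T, lev (par x) = lev x + 1)
    (hfin : ∀ x : T, {y : T | par y = x}.Finite)
    (hconn : ∀ x y : T, ∃ n m : ℕ, par^[n] x = par^[m] y)
    (ν : Measure (PBoundary par lev))
    (f : PBoundary par lev → ℝ) (hf : Integrable f ν)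
    (lam : ℝ) (hlam : 0 < lam) :
    ν {ω : PBoundary par lev | ENNReal.ofReal lam < maximal par lev ν f ω}
      ≤ ENNReal.ofReal (lam⁻¹ * ∫ ω, |f ω| ∂ν) := by
  have : Countable T := countable_of_finite_fibers hfin hconn
  have hL : ENNReal.ofReal lam ≠ 0 := (ENNReal.ofReal_pos.2 hlam).ne'
  rw [ENNReal.ofReal_mul (inv_nonneg.2 hlam.le), ENNReal.ofReal_inv_of_pos hlam,
    ofReal_integral_eq_lintegral_ofReal hf.abs (ae_of_all _ fun ω => abs_nonneg _),
    ← ENNReal.div_eq_inv_mul, ENNReal.le_div_iff_mul_le (.inl hL) (.inl ENNReal.ofReal_ne_top),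
    mul_comm]
  exact (mul_le_mul_right (measure_mono (setOf_lt_maximal_subset f _)) _).trans
    (mul_measure_biUnion_sector_le hlev fun x hx => hx.le)

/-- The Hardy–Littlewood maximal operator on `∂T` is of weak type `(1,1)`
with constant at most `1`. -/
theorem stmt0 {T : Type*} [Nonempty T] (par : T → T) (lev : T → ℤ)
    (hlev : ∀ x : T, lev (par x) = lev x + 1)
    (hfin : ∀ x : T, {y : T | par y = x}.Finite)
    (hsucc : ∀ x : T, ∃ y : T, par y = x)
    (hconn : ∀ x y : T, ∃ n m : ℕ, par^[n] x = par^[m] y)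
    (ν : Measure (PBoundary par lev))
    (hν : ∀ x : T, 0 < ν (sector par lev x) ∧ ν (sector par lev x) < ⊤)
    (f : PBoundary par lev → ℝ) (hf : Integrable f ν)
    (lam : ℝ) (hlam : 0 < lam) :
    ν {ω : PBoundary par lev | ENNReal.ofReal lam < maximal par lev ν f ω}
      ≤ ENNReal.ofReal (lam⁻¹ * ∫ ω, |f ω| ∂ν) :=
  stmt0_general par lev hlev hfin hconn ν f hf lam hlam
end

section
/- Let g : ∂T → ℝ be integrable on every sector ∂T_x (i.e. g ∈ L¹_loc(∂T, ν)). Then the function f defined by f(x) = (1/m_ν(x)) ∫_{∂T_x} g dν is harmonic on T. -/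
open MeasureTheory
open scoped ENNReal NNReal

/-- A function on `T` is harmonic if `Δf(x) = f(x) - Σ_{y ∈ s(x)} f(y) m_ν(y)/m_ν(x) = 0`
for every vertex `x`. -/
def Harmonic {T : Type*} (par : T → T) (lev : T → ℤ)
    (ν : Measure (PBoundary par lev)) (f : T → ℝ) : Prop :=
  ∀ x : T, f x = ∑ᶠ y ∈ {y : T | par y = x}, f y * (mnu par lev ν y / mnu par lev ν x)

/-! The sector `∂T_x` is the disjoint union of the sectors `∂T_y` of the finitely many
children `y` of `x`, so `∫_{∂T_x} g = Σ_y ∫_{∂T_y} g`; in the Laplacian of `f` the weight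
`m_ν(y)` cancels the normalisation of `f(y)`. -/

namespace PBoundary

variable {T : Type*} {par : T → T} {lev : T → ℤ}

theorem measurableSet_sector (x : T) : MeasurableSet (sector par lev x) :=
  MeasurableSpace.measurableSet_generateFrom (Set.mem_range_self x)

theorem mem_sector_iff {ω : PBoundary par lev} {x : T} : ω ∈ sector par lev x ↔ ω.1 (lev x) = x :=
  Iff.rfl

theorem pairwiseDisjoint_sector_level (n : ℤ) :
    {y : T | lev y = n}.PairwiseDisjoint (sector par lev) := by
  intro y₁ h₁ y₂ h₂ hne
  refine Set.disjoint_left.mpr fun ω hω₁ hω₂ => hne ?_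
  rw [mem_sector_iff, Set.mem_ofPred_eq.mp h₁] at hω₁
  rw [mem_sector_iff, Set.mem_ofPred_eq.mp h₂] at hω₂
  rw [← hω₁, ← hω₂]

variable (hlev : ∀ x : T, lev (par x) = lev x + 1)
include hlev

theorem lev_eq_sub_one_of_par_eq {x y : T} (h : par y = x) : lev y = lev x - 1 := by
  rw [← h, hlev]
  ring

theorem pairwiseDisjoint_sector_children (x : T) :
    {y : T | par y = x}.PairwiseDisjoint (sector par lev) :=
  (pairwiseDisjoint_sector_level (lev x - 1)).subset
    fun _ hy => lev_eq_sub_one_of_par_eq hlev hy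

/-- The child through which `ω ∈ ∂T_x` passes is its coordinate `ω (lev x - 1)`. -/
theorem sector_eq_biUnion_children (x : T) :
    sector par lev x = ⋃ y ∈ {y : T | par y = x}, sector par lev y := by
  ext ω
  simp only [Set.mem_iUnion, Set.mem_ofPred_eq, mem_sector_iff, exists_prop]
  constructor
  · intro h
    refine ⟨ω.1 (lev x - 1), ?_, by rw [ω.2.1]⟩
    rw [ω.2.2, sub_add_cancel, h]
  · rintro ⟨y, rfl, hω⟩
    rw [hlev, ← ω.2.2, hω]

theorem integral_sector_eq_sum_children {ν : Measure (PBoundary par lev)}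
    {g : PBoundary par lev → ℝ} (hg : ∀ x : T, IntegrableOn g (sector par lev x) ν)
    {x : T} (hfin : {y : T | par y = x}.Finite) :
    ∫ ω in sector par lev x, g ω ∂ν = ∑ y ∈ hfin.toFinset, ∫ ω in sector par lev y, g ω ∂ν := by
  conv_lhs => rw [sector_eq_biUnion_children hlev x, ← hfin.coe_toFinset]
  exact integral_biUnion_finset _ (fun y _ => measurableSet_sector y)
    ((pairwiseDisjoint_sector_children hlev x).subset hfin.coe_toFinset.subset) fun y _ => hg y

end PBoundary

open PBoundary in
theorem stmt4_general {T : Type*} (par : T → T) (lev : T → ℤ)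
    (hlev : ∀ x : T, lev (par x) = lev x + 1)
    (hfin : ∀ x : T, {y : T | par y = x}.Finite)
    (ν : Measure (PBoundary par lev))
    (hν : ∀ x : T, 0 < ν (sector par lev x) ∧ ν (sector par lev x) < ⊤)
    (g : PBoundary par lev → ℝ)
    (hg : ∀ x : T, IntegrableOn g (sector par lev x) ν) :
    Harmonic par lev ν
      (fun x : T => (mnu par lev ν x)⁻¹ * ∫ ω in sector par lev x, g ω ∂ν) := by
  intro x
  dsimp only
  have hmnu : ∀ y : T, mnu par lev ν y ≠ 0 := fun y =>
    (ENNReal.toReal_pos (hν y).1.ne' (hν y).2.ne).ne'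
  rw [integral_sector_eq_sum_children hlev hg (hfin x),
    finsum_mem_eq_finite_toFinset_sum _ (hfin x), Finset.mul_sum]
  refine Finset.sum_congr rfl fun y _ => ?_
  field_simp [hmnu y]

/-- If `g ∈ L¹_loc(∂T, ν)` then
`f(x) = m_ν(x)⁻¹ ∫_{∂T_x} g dν` is harmonic on `T`. -/
theorem stmt4 {T : Type*} [Nonempty T] (par : T → T) (lev : T → ℤ)
    (hlev : ∀ x : T, lev (par x) = lev x + 1)
    (hfin : ∀ x : T, {y : T | par y = x}.Finite)
    (hsucc : ∀ x : T, ∃ y : T, par y = x)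
    (hconn : ∀ x y : T, ∃ n m : ℕ, par^[n] x = par^[m] y)
    (ν : Measure (PBoundary par lev))
    (hν : ∀ x : T, 0 < ν (sector par lev x) ∧ ν (sector par lev x) < ⊤)
    (g : PBoundary par lev → ℝ)
    (hg : ∀ x : T, IntegrableOn g (sector par lev x) ν) :
    Harmonic par lev ν
      (fun x : T => (mnu par lev ν x)⁻¹ * ∫ ω in sector par lev x, g ω ∂ν) :=
  stmt4_general par lev hlev hfin ν hν g hg
end
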